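/- Zero set of a nonzero real-analytic function is Lebesgue-null (instance used): if g : ℝⁿ → ℝ is real-analytic on a connected open set U and g is not identically zero on U, then {x ∈ U : g(x) = 0} has Lebesgue measure zero. -/

import Mathlib

/-!
Translate a point `w` with `g w ≠ 0` to the origin. On every line through `w` (inside a convex
neighbourhood) `g` restricts to a one-variable analytic function that is nonzero at `w`, so its
zeros are isolated and hence countable. In polar coordinates Haar measure is a product of a
measure on the sphere with a non-atomic radial measure, so a measurable set meeting every line
through the origin in a countable set is null. Connectedness lets the identity theorem supply
such a `w` near every point of `U`.
-/

open MeasureTheory Set Metric Filter Topology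

theorem IsOpen.measurableSet_sep_eq {α β : Type*} [TopologicalSpace α] [MeasurableSpace α]
    [OpensMeasurableSpace α] [TopologicalSpace β] [T1Space β] {f : α → β} {s : Set α}
    (hs : IsOpen s) (hf : ContinuousOn f s) (b : β) : MeasurableSet {x ∈ s | f x = b} := by
  have : {x ∈ s | f x = b} = s \ (s ∩ f ⁻¹' {b}ᶜ) := by
    ext x; by_cases hx : x ∈ s <;> simp [hx]
  rw [this]
  exact hs.measurableSet.diff (hf.isOpen_inter_preimage hs isOpen_compl_singleton).measurableSet

theorem AnalyticOnNhd.countable_sep_eq_zero {𝕜 F : Type*} [NontriviallyNormedField 𝕜]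
    [SecondCountableTopology 𝕜] [NormedAddCommGroup F] [NormedSpace 𝕜 F] {f : 𝕜 → F} {U : Set 𝕜}
    (hf : AnalyticOnNhd 𝕜 f U) (hU : IsPreconnected U) (hne : ∃ x ∈ U, f x ≠ 0) :
    {x ∈ U | f x = 0}.Countable := by
  obtain ⟨x, hxU, hfx⟩ := hne
  rcases hf.eqOn_zero_or_eventually_ne_zero_of_preconnected hU with hzero | hcodiscrete
  · exact absurd (hzero hxU) hfx
  · have hdiscrete : IsDiscrete (f ⁻¹' {0} ∩ U) :=
      isDiscrete_of_codiscreteWithin hcodiscrete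
    exact ((HereditarilyLindelofSpace.isLindelof _).countable_of_isDiscrete hdiscrete).mono
      fun y ⟨hyU, hfy⟩ => show y ∈ f ⁻¹' {0} ∩ U from ⟨hfy, hyU⟩

theorem AnalyticOnNhd.exists_ne_zero_of_mem_nhds {𝕜 E F : Type*} [NontriviallyNormedField 𝕜]
    [NormedAddCommGroup E] [NormedSpace 𝕜 E] [NormedAddCommGroup F] [NormedSpace 𝕜 F]
    {f : E → F} {U s : Set E} {x : E} (hf : AnalyticOnNhd 𝕜 f U) (hU : IsPreconnected U)
    (hne : ∃ y ∈ U, f y ≠ 0) (hx : x ∈ U) (hs : s ∈ 𝓝 x) : ∃ y ∈ s, f y ≠ 0 := by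
  by_contra! hzero
  obtain ⟨y, hyU, hfy⟩ := hne
  exact hfy (hf.eqOn_zero_of_preconnected_of_eventuallyEq_zero hU hx
    (eventually_of_mem hs hzero) hyU)

theorem MeasureTheory.Measure.volumeIoiPow_eq_zero_of_countable (n : ℕ) {s : Set (Ioi (0 : ℝ))}
    (hs : s.Countable) : Measure.volumeIoiPow n s = 0 := by
  refine withDensity_absolutelyContinuous _ _ ?_
  rw [comap_subtype_coe_apply measurableSet_Ioi]
  exact (hs.image _).measure_zero _

section AddHaar

variable {E F : Type*} [NormedAddCommGroup E] [NormedSpace ℝ E] [FiniteDimensional ℝ E]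
  [MeasurableSpace E] [BorelSpace E] (μ : Measure E) [μ.IsAddHaarMeasure]
  [NormedAddCommGroup F] [NormedSpace ℝ F]

theorem MeasureTheory.Measure.addHaar_eq_zero_of_countable_lines {A : Set E}
    (hA : MeasurableSet A) (hlines : ∀ u : E, {r : ℝ | r • u ∈ A}.Countable) : μ A = 0 := by
  have h0 : (0 : E) ∉ A := fun h0 =>
    Cardinal.not_countable_real (by simpa [h0] using hlines 0)
  set polar := homeomorphUnitSphereProd E
  set S := polar.symm ⁻¹' (Subtype.val ⁻¹' A)
  have hS : MeasurableSet S := (hA.preimage measurable_subtype_coe).preimage polar.symm.measurable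
  have hslice (u : sphere (0 : E) 1) : (Prod.mk u ⁻¹' S).Countable :=
    ((hlines u).preimage Subtype.val_injective).mono fun r hr => by simpa [S, polar] using hr
  calc μ A = μ.comap Subtype.val (Subtype.val ⁻¹' A : Set ({0}ᶜ : Set E)) := by
        rw [comap_subtype_coe_apply (measurableSet_singleton 0).compl, Subtype.image_preimage_coe,
          inter_eq_right.2 (subset_compl_singleton_iff.2 h0)]
    _ = (μ.toSphere.prod (Measure.volumeIoiPow (Module.finrank ℝ E - 1))) S := by
        rw [← (μ.measurePreserving_homeomorphUnitSphereProd).measure_preimage hS.nullMeasurableSet]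
        exact congrArg _ (polar.toEquiv.preimage_symm_preimage _).symm
    _ = 0 := by
        simp [Measure.prod_apply hS, Measure.volumeIoiPow_eq_zero_of_countable _ (hslice _)]

theorem AnalyticOnNhd.addHaar_sep_eq_zero_of_convex {g : E → F} {C : Set E} (hC : IsOpen C)
    (hCconv : Convex ℝ C) (hg : AnalyticOnNhd ℝ g C) {w : E} (hw : w ∈ C) (hgw : g w ≠ 0) :
    μ {x ∈ C | g x = 0} = 0 := by
  rw [← measure_preimage_add μ w]
  refine Measure.addHaar_eq_zero_of_countable_lines μ
    ((hC.measurableSet_sep_eq hg.continuousOn 0).preimage (measurable_const_add w)) fun u => ?_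
  let line : ℝ →ᵃ[ℝ] E := AffineMap.lineMap w (w + u)
  have hline : ⇑line = fun t => w + t • u := funext fun t => by
    simp [line, AffineMap.lineMap_apply, add_comm]
  have hconn : IsPreconnected ((fun t : ℝ => w + t • u) ⁻¹' C) :=
    hline ▸ (hCconv.affine_preimage line).isPreconnected
  have hanalytic : AnalyticOnNhd ℝ (fun t : ℝ => g (w + t • u)) ((fun t => w + t • u) ⁻¹' C) :=
    hg.comp (fun _ _ => by fun_prop) fun _ ht => ht
  simpa using hanalytic.countable_sep_eq_zero hconn ⟨0, by simpa using hw, by simpa using hgw⟩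

theorem AnalyticOnNhd.addHaar_sep_eq_zero {g : E → F} {U : Set E} (hU : IsOpen U)
    (hconn : IsPreconnected U) (hg : AnalyticOnNhd ℝ g U) (hne : ∃ x ∈ U, g x ≠ 0) :
    μ {x ∈ U | g x = 0} = 0 := by
  refine measure_null_of_locally_null _ fun x hx => ?_
  obtain ⟨ε, hε, hball⟩ := Metric.mem_nhds_iff.1 (hU.mem_nhds hx.1)
  obtain ⟨w, hw, hgw⟩ := hg.exists_ne_zero_of_mem_nhds hconn hne hx.1 (ball_mem_nhds x hε)
  refine ⟨_, inter_mem_nhdsWithin _ (ball_mem_nhds x hε), measure_mono_null ?_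
    ((hg.mono hball).addHaar_sep_eq_zero_of_convex μ isOpen_ball (convex_ball x ε) hw hgw)⟩
  exact fun y ⟨⟨_, hgy⟩, hy⟩ => ⟨hy, hgy⟩

end AddHaar

/-- the zero set of a real-analytic function, not identically
    zero on a connected open set U ⊆ ℝⁿ, has Lebesgue measure zero. -/
theorem stmt_16 (n : ℕ) (g : (Fin n → ℝ) → ℝ) (U : Set (Fin n → ℝ))
    (hU : IsOpen U) (hconn : IsConnected U)
    (hg : AnalyticOn ℝ g U)
    (hne : ∃ x ∈ U, g x ≠ 0) :
    MeasureTheory.volume {x ∈ U | g x = 0} = 0 :=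
  (hU.analyticOn_iff_analyticOnNhd.1 hg).addHaar_sep_eq_zero volume hU hconn.isPreconnected hne
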